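/- For every history H, there exist relations WR, WW, RW extending H to a dependency graph with SO ∪ WR ∪ WW ∪ RW acyclic if and only if there exists an acyclic directed labeled graph compatible with the hyper-polygraph of H. -/
import Mathlib


namespace DBIso

/-! ### Operations, transactions and histories -/

/-- An operation: a read `R(x,v)` or a write `W(x,v)` on key `x` with value `v`. -/
inductive Op (Key Val : Type) where
  | read  (k : Key) (v : Val)
  | write (k : Key) (v : Val)

variable {Key Val : Type}

/-- The key accessed by an operation. -/
def Op.key : Op Key Val → Key
  | .read k _ => k
  | .write k _ => k

/-- The value read or written by an operation. -/
def Op.val : Op Key Val → Val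
  | .read _ w => w
  | .write _ w => w

/-- A transaction: a finite nonempty set of (identified) operations together with
a strict total order on them (the program order), modelled as a nonempty list of
operations tagged by pairwise distinct operation identifiers; the list order is
the program order `po`. -/
structure Txn (Key Val : Type) where
  ops : List (ℕ × Op Key Val)
  ops_nonempty : ops ≠ []
  ids_nodup : (ops.map Prod.fst).Nodup

/-- The operation of `T` at position `i` (in program order). -/
def Txn.opAt (T : Txn Key Val) (i : Fin T.ops.length) : Op Key Val :=
  (T.ops.get i).2

/-- `T ⊢ W(x,v)`: `T` writes to key `x` and `v` is the po-last value it writes to `x`. -/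
def Txn.FWrites (T : Txn Key Val) (x : Key) (v : Val) : Prop :=
  ∃ i : Fin T.ops.length, T.opAt i = Op.write x v ∧
    ∀ j : Fin T.ops.length, i < j → ∀ w : Val, T.opAt j ≠ Op.write x w

/-- `T ∈ WriteTx_x` : `T` writes to key `x`. -/
def Txn.WritesKey (T : Txn Key Val) (x : Key) : Prop :=
  ∃ v : Val, T.FWrites x v

/-- `T ⊢ R(x,v)`: `T` reads `x` before writing to it and `v` is the value returned
by the po-first such read (equivalently, the po-first operation of `T` on `x` is a
read returning `v`). -/
def Txn.FReads (T : Txn Key Val) (x : Key) (v : Val) : Prop :=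
  ∃ i : Fin T.ops.length, T.opAt i = Op.read x v ∧
    ∀ j : Fin T.ops.length, j < i → (T.opAt j).key ≠ x

/-- Internal consistency of a transaction: every read of a key `x` that is po-preceded
by an operation on `x` returns the value of the po-latest preceding operation on `x`. -/
def Txn.Internal (T : Txn Key Val) : Prop :=
  ∀ i j : Fin T.ops.length, j < i → ∀ (x : Key) (v : Val),
    T.opAt i = Op.read x v → (T.opAt j).key = x →
    (∀ k : Fin T.ops.length, j < k → k < i → (T.opAt k).key ≠ x) →
    (T.opAt j).val = v

/-- A history: a finite set of transactions with pairwise disjoint operation sets,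
together with the session order `SO` (a union of strict total orders on the disjoint
subsets, given by `sess`, partitioning the transactions), and a distinguished initial
transaction `init` (`T_⊥`) writing to every key and `SO`-preceding every other
transaction. -/
structure History (Key Val : Type) where
  txns : Set (Txn Key Val)
  txns_finite : txns.Finite
  SO : Txn Key Val → Txn Key Val → Prop
  sess : Txn Key Val → ℕ
  init : Txn Key Val
  ops_disjoint : ∀ T ∈ txns, ∀ S ∈ txns, T ≠ S →
      ∀ i ∈ T.ops.map Prod.fst, i ∉ S.ops.map Prod.fst
  so_mem : ∀ T S, SO T S → T ∈ txns ∧ S ∈ txns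
  so_irrefl : ∀ T, ¬ SO T T
  so_trans : ∀ T S U, SO T S → SO S U → SO T U
  so_total_sess : ∀ T ∈ txns, ∀ S ∈ txns, T ≠ S → sess T = sess S → SO T S ∨ SO S T
  so_sess : ∀ T S, SO T S → sess T = sess S ∨ T = init
  init_mem : init ∈ txns
  init_writes : ∀ x : Key, ∃ v : Val, init.FWrites x v
  init_so : ∀ T ∈ txns, T ≠ init → SO init T

/-- `H ⊨ Int`: every transaction of `H` is internally consistent. -/
def History.SatInt (H : History Key Val) : Prop :=
  ∀ T ∈ H.txns, T.Internal

/-- `r` is a strict total order on the set `s`. -/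
def IsStrictTotalOrderOn {α : Type*} (s : Set α) (r : α → α → Prop) : Prop :=
  (∀ a b, r a b → a ∈ s ∧ b ∈ s) ∧
  (∀ a, ¬ r a a) ∧
  (∀ a b c, r a b → r b c → r a c) ∧
  (∀ a ∈ s, ∀ b ∈ s, a ≠ b → r a b ∨ r b a)

/-- `H` satisfies SER: `H ⊨ Int` and there is a strict total order `co` on the
transactions of `H` extending `SO` such that every read `S ⊢ R(x,v)` reads the
value written by the `co`-greatest `co`-predecessor of `S` writing `x`. -/
def History.SatSER (H : History Key Val) : Prop :=
  H.SatInt ∧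
  ∃ co : Txn Key Val → Txn Key Val → Prop,
    IsStrictTotalOrderOn H.txns co ∧
    (∀ T S, H.SO T S → co T S) ∧
    ∀ S ∈ H.txns, ∀ (x : Key) (v : Val), S.FReads x v →
      ∃ T', co T' S ∧ T'.WritesKey x ∧
        (∀ T, co T S → T.WritesKey x → T = T' ∨ co T T') ∧
        T'.FWrites x v

/-! ### Dependency graphs -/

/-- `(WR, WW, RW)` extend the history `H` to a dependency graph. -/
def IsDepGraph (H : History Key Val)
    (WR WW RW : Key → Txn Key Val → Txn Key Val → Prop) : Prop :=
  (∀ (x : Key) (T S : Txn Key Val), WR x T S → T ∈ H.txns ∧ S ∈ H.txns) ∧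
  (∀ x : Key, ∀ S ∈ H.txns, (∃ v, S.FReads x v) → ∃! T, WR x T S) ∧
  (∀ (x : Key) (T S : Txn Key Val), WR x T S →
      T ≠ S ∧ ∃ v, T.FWrites x v ∧ S.FReads x v) ∧
  (∀ x : Key, IsStrictTotalOrderOn {T | T ∈ H.txns ∧ T.WritesKey x} (WW x)) ∧
  (∀ (x : Key) (T S : Txn Key Val),
      RW x T S ↔ T ≠ S ∧ ∃ T', WR x T' T ∧ WW x T' S)

/-- A binary relation is acyclic iff its transitive closure is irreflexive. -/
def RelAcyclic {α : Type*} (r : α → α → Prop) : Prop :=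
  ∀ a, ¬ Relation.TransGen r a a

/-- The union `SO ∪ WR ∪ WW ∪ RW` as a binary relation on transactions. -/
def DepUnion (H : History Key Val)
    (WR WW RW : Key → Txn Key Val → Txn Key Val → Prop) :
    Txn Key Val → Txn Key Val → Prop :=
  fun T S => H.SO T S ∨ (∃ x, WR x T S) ∨ (∃ x, WW x T S) ∨ (∃ x, RW x T S)

/-- The relation `(SO ∪ WR ∪ WW) ; RW?`. -/
def SIRel (H : History Key Val)
    (WR WW RW : Key → Txn Key Val → Txn Key Val → Prop) :
    Txn Key Val → Txn Key Val → Prop :=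
  fun T S => ∃ U, (H.SO T U ∨ (∃ x, WR x T U) ∨ (∃ x, WW x T U)) ∧
    (U = S ∨ ∃ x, RW x U S)

/-- `H` satisfies SI: `H ⊨ Int` and there exist `WR, WW, RW` extending `H` to a
dependency graph with `(SO ∪ WR ∪ WW) ; RW?` acyclic. -/
def History.SatSI (H : History Key Val) : Prop :=
  H.SatInt ∧ ∃ WR WW RW, IsDepGraph H WR WW RW ∧ RelAcyclic (SIRel H WR WW RW)

/-! ### Labeled edges and hyper-polygraphs -/

/-- Dependency edge labels. -/
inductive DepLbl (Key : Type) where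
  | SO
  | WR (x : Key)
  | WW (x : Key)
  | RW (x : Key)

/-- A directed labeled edge. -/
structure LEdge (V L : Type) where
  src : V
  dst : V
  lbl : L

variable {V L : Type}

abbrev DepEdge (V Key : Type) := LEdge V (DepLbl Key)
abbrev DepEdgeSet (V Key : Type) := Set (DepEdge V Key)

/-- There is an edge of `E` from `a` to `b`. -/
def EStep (E : Set (LEdge V L)) (a b : V) : Prop := ∃ l, LEdge.mk a b l ∈ E

/-- A set of labeled edges is cyclic iff some vertex has a nonempty edge path to itself. -/
def EdgeCyclic (E : Set (LEdge V L)) : Prop := ∃ a, Relation.TransGen (EStep E) a a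

/-- `a ⤳ b`: there is a (possibly empty) edge path of `E` from `a` to `b`. -/
def EReach (E : Set (LEdge V L)) (a b : V) : Prop := Relation.ReflTransGen (EStep E) a b

/-- A hyper-polygraph over the vertex type `V`: a known edge set `E` together with
the constraint collections `C^WW` and `C^WR`. -/
structure HyperPolygraph (V Key : Type) where
  E : DepEdgeSet V Key
  CWW : Set (DepEdgeSet V Key)
  CWR : Set (DepEdgeSet V Key)

/-- A directed labeled graph (given by its edge set `E'` over the same vertex set)
is compatible with the hyper-polygraph `G`. -/
def Compatible (G : HyperPolygraph V Key) (E' : DepEdgeSet V Key) : Prop :=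
  G.E ⊆ E' ∧
  (∀ (x : Key) (T T' S : V), T ≠ S →
      LEdge.mk T' T (DepLbl.WR x) ∈ E' → LEdge.mk T' S (DepLbl.WW x) ∈ E' →
      LEdge.mk T S (DepLbl.RW x) ∈ E') ∧
  (∀ C ∈ G.CWW ∪ G.CWR, ∃! e, e ∈ E' ∧ e ∈ C)

/-- A hyper-polygraph is SER-acyclic iff some acyclic graph is compatible with it. -/
def SERAcyclic (G : HyperPolygraph V Key) : Prop :=
  ∃ E', Compatible G E' ∧ ¬ EdgeCyclic E'

/-- The vertex set of the hyper-polygraph of a history: its transactions. -/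
abbrev History.Vert (H : History Key Val) : Type := {T : Txn Key Val // T ∈ H.txns}

/-- The hyper-polygraph of a history `H`. -/
def History.hpg (H : History Key Val) : HyperPolygraph H.Vert Key where
  E := {e | (e.lbl = DepLbl.SO ∧ H.SO e.src.1 e.dst.1) ∨
        (∃ (x : Key) (v : Val), e.lbl = DepLbl.WR x ∧
          e.dst.1.FReads x v ∧ e.src.1.FWrites x v ∧ e.src ≠ e.dst ∧
          (∀ T : H.Vert, T.1.FWrites x v → T ≠ e.dst → T = e.src))}
  CWW := {C | ∃ (x : Key) (T S : H.Vert), T ≠ S ∧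
        T.1.WritesKey x ∧ S.1.WritesKey x ∧
        C = {LEdge.mk T S (DepLbl.WW x), LEdge.mk S T (DepLbl.WW x)}}
  CWR := {C | ∃ (x : Key) (S : H.Vert) (v : Val), S.1.FReads x v ∧
        C = {e | ∃ T : H.Vert, T.1.FWrites x v ∧ T ≠ S ∧ e = LEdge.mk T S (DepLbl.WR x)}}

/-- The induced SI graph of a directed labeled graph:
`(E'_SO ∪ E'_WR ∪ E'_WW) ; (E'_RW)?`. -/
def InducedSI (E' : DepEdgeSet V Key) : V → V → Prop :=
  fun a b => ∃ c : V,
    (LEdge.mk a c DepLbl.SO ∈ E' ∨ (∃ x, LEdge.mk a c (DepLbl.WR x) ∈ E') ∨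
      (∃ x, LEdge.mk a c (DepLbl.WW x) ∈ E')) ∧
    (c = b ∨ ∃ x, LEdge.mk c b (DepLbl.RW x) ∈ E')

/-! ### Commit-order hyper-polygraphs -/

/-- Labels for commit-order hyper-polygraphs. -/
inductive COLbl (Key : Type) where
  | SO
  | WR (x : Key)
  | CO

abbrev COEdge (V Key : Type) := LEdge V (COLbl Key)

/-- A commit-order hyper-polygraph. -/
structure COHyperPolygraph (V Key : Type) where
  E : Set (COEdge V Key)
  CCO : Set (Set (COEdge V Key))
  CWR : Set (Set (COEdge V Key))

/-- The commit-order hyper-polygraph of a history `H`. -/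
def History.cohpg (H : History Key Val) : COHyperPolygraph H.Vert Key where
  E := {e | (e.lbl = COLbl.SO ∧ H.SO e.src.1 e.dst.1) ∨
        (∃ (x : Key) (v : Val), e.lbl = COLbl.WR x ∧
          e.dst.1.FReads x v ∧ e.src.1.FWrites x v ∧ e.src ≠ e.dst ∧
          (∀ T : H.Vert, T.1.FWrites x v → T ≠ e.dst → T = e.src))}
  CCO := {C | ∃ T S : H.Vert, T ≠ S ∧
        C = {LEdge.mk T S COLbl.CO, LEdge.mk S T COLbl.CO}}
  CWR := {C | ∃ (x : Key) (S : H.Vert) (v : Val), S.1.FReads x v ∧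
        C = {e | ∃ T : H.Vert, T.1.FWrites x v ∧ T ≠ S ∧ e = LEdge.mk T S (COLbl.WR x)}}

/-- A directed labeled graph (given by its edge set `E'`) is SER-compatible with the
commit-order hyper-polygraph of the history `H`. -/
def SERCompatible (H : History Key Val) (E' : Set (COEdge H.Vert Key)) : Prop :=
  H.cohpg.E ⊆ E' ∧
  (∀ C ∈ H.cohpg.CCO ∪ H.cohpg.CWR, ∃! e, e ∈ E' ∧ e ∈ C) ∧
  (∀ (x : Key) (T₁ T₂ T₃ : H.Vert), T₁ ≠ T₂ →
      LEdge.mk T₁ T₃ (COLbl.WR x) ∈ E' → T₂.1.WritesKey x →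
      LEdge.mk T₂ T₃ COLbl.CO ∈ E' → LEdge.mk T₂ T₁ COLbl.CO ∈ E')

/-- The read-from conditions of a dependency graph on a family `WR`. -/
def ReadFromConds (H : History Key Val)
    (WR : Key → Txn Key Val → Txn Key Val → Prop) : Prop :=
  (∀ (x : Key) (T S : Txn Key Val), WR x T S → T ∈ H.txns ∧ S ∈ H.txns) ∧
  (∀ x : Key, ∀ S ∈ H.txns, (∃ v, S.FReads x v) → ∃! T, WR x T S) ∧
  (∀ (x : Key) (T S : Txn Key Val), WR x T S →
      T ≠ S ∧ ∃ v, T.FWrites x v ∧ S.FReads x v)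

/-! ### The pruning transition system -/

/-- `{(S,T',RW,x) : (T,S,WR,x) ∈ E, S ≠ T'}`: the RW edges derived from the WW edge
`(T,T',WW,x)` and the WR edges of `E`. -/
def DerivedRWofWW (E : DepEdgeSet V Key) (T T' : V) (x : Key) : DepEdgeSet V Key :=
  {e | ∃ S : V, LEdge.mk T S (DepLbl.WR x) ∈ E ∧ S ≠ T' ∧
      e = LEdge.mk S T' (DepLbl.RW x)}

/-- `{(S,T',RW,x) : (T,T',WW,x) ∈ E, S ≠ T'}`: the RW edges derived from the WR edge
`(T,S,WR,x)` and the WW edges of `E`. -/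
def DerivedRWofWR (E : DepEdgeSet V Key) (T S : V) (x : Key) : DepEdgeSet V Key :=
  {e | ∃ T' : V, LEdge.mk T T' (DepLbl.WW x) ∈ E ∧ S ≠ T' ∧
      e = LEdge.mk S T' (DepLbl.RW x)}

/-- States of the pruning transition system: a triple `⟨E, C^WW, C^WR⟩` or the
terminal state `S#` (`bad`). -/
inductive PState (V Key : Type) where
  | node (E : DepEdgeSet V Key) (CWW CWR : Set (DepEdgeSet V Key)) : PState V Key
  | bad : PState V Key

/-- The pruning transition relation `↪`. -/
inductive PruneStep : PState V Key → PState V Key → Prop where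
  | noChoice {E : DepEdgeSet V Key} {CWW CWR : Set (DepEdgeSet V Key)}
      (h : (∅ : DepEdgeSet V Key) ∈ CWW ∪ CWR) :
      PruneStep (.node E CWW CWR) .bad
  | cyc {E : DepEdgeSet V Key} {CWW CWR : Set (DepEdgeSet V Key)}
      (h : EdgeCyclic E) :
      PruneStep (.node E CWW CWR) .bad
  | wwElim {E : DepEdgeSet V Key} {CWW CWR : Set (DepEdgeSet V Key)}
      {cons : DepEdgeSet V Key} {T T' : V} {x : Key}
      (hc : cons ∈ CWW) (he : LEdge.mk T T' (DepLbl.WW x) ∈ cons)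
      (hcyc : EdgeCyclic (E ∪ {LEdge.mk T T' (DepLbl.WW x)} ∪ DerivedRWofWW E T T' x)) :
      PruneStep (.node E CWW CWR)
        (.node E ((CWW \ {cons}) ∪ {cons \ {LEdge.mk T T' (DepLbl.WW x)}}) CWR)
  | wrElim {E : DepEdgeSet V Key} {CWW CWR : Set (DepEdgeSet V Key)}
      {cons : DepEdgeSet V Key} {T S : V} {x : Key}
      (hc : cons ∈ CWR) (he : LEdge.mk T S (DepLbl.WR x) ∈ cons)
      (hcyc : EdgeCyclic (E ∪ {LEdge.mk T S (DepLbl.WR x)} ∪ DerivedRWofWR E T S x)) :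
      PruneStep (.node E CWW CWR)
        (.node E CWW ((CWR \ {cons}) ∪ {cons \ {LEdge.mk T S (DepLbl.WR x)}}))
  | wwIntro {E : DepEdgeSet V Key} {CWW CWR : Set (DepEdgeSet V Key)}
      {T T' : V} {x : Key}
      (hc : ({LEdge.mk T T' (DepLbl.WW x)} : DepEdgeSet V Key) ∈ CWW) :
      PruneStep (.node E CWW CWR)
        (.node (E ∪ {LEdge.mk T T' (DepLbl.WW x)} ∪ DerivedRWofWW E T T' x)
          (CWW \ {{LEdge.mk T T' (DepLbl.WW x)}}) CWR)
  | wrIntro {E : DepEdgeSet V Key} {CWW CWR : Set (DepEdgeSet V Key)}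
      {T S : V} {x : Key}
      (hc : ({LEdge.mk T S (DepLbl.WR x)} : DepEdgeSet V Key) ∈ CWR) :
      PruneStep (.node E CWW CWR)
        (.node (E ∪ {LEdge.mk T S (DepLbl.WR x)} ∪ DerivedRWofWR E T S x)
          CWW (CWR \ {{LEdge.mk T S (DepLbl.WR x)}}))

/-! ### Boolean encoding -/

/-- The edges occurring in some constraint of `G` (i.e. the edges carrying a
Boolean variable, besides the RW variables). -/
def ConsEdges (G : HyperPolygraph V Key) : DepEdgeSet V Key :=
  ⋃₀ (G.CWW ∪ G.CWR)

/-- The truth value, under the assignment `α`, of the literal associated with an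
edge: the constant true if the edge lies in `G.E`, and its variable's value
otherwise. -/
def EdgeVal (G : HyperPolygraph V Key) (α : DepEdge V Key → Prop)
    (e : DepEdge V Key) : Prop :=
  e ∈ G.E ∨ α e

/-- `α` satisfies the Boolean encoding `Φ_G` of the hyper-polygraph `G`. -/
def SatPhi (G : HyperPolygraph V Key) (α : DepEdge V Key → Prop) : Prop :=
  (∀ C ∈ G.CWW ∪ G.CWR, ∃ e ∈ C, α e) ∧
  (∀ C ∈ G.CWW ∪ G.CWR, ∀ e ∈ C, ∀ e' ∈ C, e ≠ e' → ¬(α e ∧ α e')) ∧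
  (∀ (x : Key) (T T' S : V), S ≠ T' →
      (LEdge.mk T T' (DepLbl.WW x) ∈ G.E ∨ LEdge.mk T T' (DepLbl.WW x) ∈ ConsEdges G) →
      (LEdge.mk T S (DepLbl.WR x) ∈ G.E ∨ LEdge.mk T S (DepLbl.WR x) ∈ ConsEdges G) →
      EdgeVal G α (LEdge.mk T T' (DepLbl.WW x)) →
      EdgeVal G α (LEdge.mk T S (DepLbl.WR x)) →
      α (LEdge.mk S T' (DepLbl.RW x)))

/-- The graph induced by the assignment `α`: `G.E` together with all constraint
edges and RW edges whose variables `α` sets to true. -/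
def InducedOf (G : HyperPolygraph V Key) (α : DepEdge V Key → Prop) :
    DepEdgeSet V Key :=
  G.E ∪ {e | e ∈ ConsEdges G ∧ α e} ∪
    {e | (∃ (x : Key) (S T' : V), S ≠ T' ∧ e = LEdge.mk S T' (DepLbl.RW x)) ∧ α e}

/-- `α` satisfies all 2-width-cycle clauses of `G`. -/
def SatPairClauses (G : HyperPolygraph V Key) (α : DepEdge V Key → Prop) : Prop :=
  (∀ e₁ e₂ : DepEdge V Key, e₁ ∈ ConsEdges G → e₂ ∈ ConsEdges G → e₁ ≠ e₂ →
      EReach G.E e₁.dst e₂.src → EReach G.E e₂.dst e₁.src → ¬(α e₁ ∧ α e₂)) ∧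
  (∀ (x : Key) (T T' S : V), T' ≠ T → T' ≠ S → EReach G.E T' S →
      LEdge.mk T T' (DepLbl.WW x) ∈ ConsEdges G →
      LEdge.mk T S (DepLbl.WR x) ∈ ConsEdges G →
      ¬(α (LEdge.mk T T' (DepLbl.WW x)) ∧ α (LEdge.mk T S (DepLbl.WR x))))

theorem freads_unique {T : Txn Key Val} {x : Key} {v v' : Val}
    (h : T.FReads x v) (h' : T.FReads x v') : v = v' := by
  obtain ⟨i, hi, hm⟩ := h
  obtain ⟨i', hi', hm'⟩ := h'
  rcases lt_trichotomy i i' with hlt | heq | hlt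
  · exact absurd (by rw [hi]; rfl : (T.opAt i).key = x) (hm' i hlt)
  · subst heq
    rw [hi] at hi'
    injection hi' with _ h2
  · exact absurd (by rw [hi']; rfl : (T.opAt i').key = x) (hm i' hlt)

/-- For every history `H`: there are relations extending `H` to a dependency graph
with `SO ∪ WR ∪ WW ∪ RW` acyclic iff there is an acyclic directed labeled graph
compatible with the hyper-polygraph of `H`. -/
theorem acyclic_depgraph_iff_acyclic_compatible (Key Val : Type) (H : History Key Val) :
    (∃ WR WW RW : Key → Txn Key Val → Txn Key Val → Prop,
        IsDepGraph H WR WW RW ∧ RelAcyclic (DepUnion H WR WW RW)) ↔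
      (∃ E' : DepEdgeSet H.Vert Key, Compatible H.hpg E' ∧ ¬ EdgeCyclic E') := by
  constructor
  · rintro ⟨WR, WW, RW, ⟨hmem, huniq, hwr, hww, hrw⟩, hac⟩
    refine ⟨{e | match e.lbl with
      | .SO => H.SO e.src.1 e.dst.1
      | .WR x => WR x e.src.1 e.dst.1
      | .WW x => WW x e.src.1 e.dst.1
      | .RW x => RW x e.src.1 e.dst.1}, ⟨?_, ?_, ?_⟩, ?_⟩
    · -- H.hpg.E ⊆ E'
      rintro ⟨a, b, l⟩ (⟨hl, hso⟩ | ⟨x, v, hl, hrd, hwrt, hne, hun⟩) <;>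
        simp only [LEdge.mk.injEq] at hl <;> subst hl
      · exact hso
      · obtain ⟨T, hT, _⟩ := huniq x b.1 b.2 ⟨v, hrd⟩
        obtain ⟨hTb, v', hw', hr'⟩ := hwr x T b.1 hT
        have hv : v' = v := freads_unique hr' hrd
        subst hv
        have hTm : T ∈ H.txns := (hmem x T b.1 hT).1
        have : (⟨T, hTm⟩ : H.Vert) = a := hun ⟨T, hTm⟩ hw'
          (fun h => hTb (congrArg Subtype.val h))
        have hTa : T = a.1 := congrArg Subtype.val this
        show WR x a.1 b.1
        exact hTa ▸ hT
    · -- RW generation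
      intro x T T' S hne h1 h2
      exact (hrw x T.1 S.1).mpr ⟨fun h => hne (Subtype.ext h), T'.1, h1, h2⟩
    · -- constraints
      rintro C (⟨x, T, S, hTS, hTw, hSw, rfl⟩ | ⟨x, S, v, hrd, rfl⟩)
      · obtain ⟨hm, hirr, htr, htot⟩ := hww x
        have hne1 : T.1 ≠ S.1 := fun h => hTS (Subtype.ext h)
        rcases htot T.1 ⟨T.2, hTw⟩ S.1 ⟨S.2, hSw⟩ hne1 with h | h
        · refine ⟨LEdge.mk T S (DepLbl.WW x), ⟨h, Or.inl rfl⟩, ?_⟩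
          rintro e ⟨he, he2⟩
          simp only [Set.mem_insert_iff, Set.mem_singleton_iff] at he2
          rcases he2 with rfl | rfl
          · rfl
          · exact absurd (htr _ _ _ h he) (hirr _)
        · refine ⟨LEdge.mk S T (DepLbl.WW x), ⟨h, Or.inr rfl⟩, ?_⟩
          rintro e ⟨he, he2⟩
          simp only [Set.mem_insert_iff, Set.mem_singleton_iff] at he2
          rcases he2 with rfl | rfl
          · exact absurd (htr _ _ _ h he) (hirr _)
          · rfl
      · obtain ⟨T, hT, hTu⟩ := huniq x S.1 S.2 ⟨v, hrd⟩
        obtain ⟨hne, v', hw', hr'⟩ := hwr x T S.1 hT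
        have hv : v' = v := freads_unique hr' hrd
        subst hv
        have hTm : T ∈ H.txns := (hmem x T S.1 hT).1
        refine ⟨LEdge.mk ⟨T, hTm⟩ S (DepLbl.WR x),
          ⟨hT, ⟨⟨T, hTm⟩, hw', fun h => hne (congrArg Subtype.val h), rfl⟩⟩, ?_⟩
        rintro e ⟨heE, T', hw'', hne'', rfl⟩
        have : T'.1 = T := hTu T'.1 heE
        exact congrArg (fun a => LEdge.mk a S (DepLbl.WR x)) (Subtype.ext this)
    · -- acyclic
      rintro ⟨a, hpath⟩
      refine hac a.1 (hpath.lift Subtype.val ?_)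
      rintro c d ⟨l, hl⟩
      cases l with
      | SO => exact Or.inl hl
      | WR x => exact Or.inr (Or.inl ⟨x, hl⟩)
      | WW x => exact Or.inr (Or.inr (Or.inl ⟨x, hl⟩))
      | RW x => exact Or.inr (Or.inr (Or.inr ⟨x, hl⟩))
  · rintro ⟨E', ⟨hsub, hgen, hcons⟩, hac⟩
    classical
    set WRr : Key → Txn Key Val → Txn Key Val → Prop := fun x T S =>
      ∃ (hT : T ∈ H.txns) (hS : S ∈ H.txns) (v : Val),
        T.FWrites x v ∧ S.FReads x v ∧ T ≠ S ∧
        LEdge.mk ⟨T, hT⟩ ⟨S, hS⟩ (DepLbl.WR x) ∈ E' with hWRr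
    set WWr : Key → Txn Key Val → Txn Key Val → Prop := fun x T S =>
      ∃ (hT : T ∈ H.txns) (hS : S ∈ H.txns),
        T ≠ S ∧ T.WritesKey x ∧ S.WritesKey x ∧
        LEdge.mk ⟨T, hT⟩ ⟨S, hS⟩ (DepLbl.WW x) ∈ E' with hWWr
    set RWr : Key → Txn Key Val → Txn Key Val → Prop := fun x T S =>
      T ≠ S ∧ ∃ T', WRr x T' T ∧ WWr x T' S with hRWr
    -- exactly-one for WW pairs
    have wwpair : ∀ (x : Key) (T S : H.Vert), T ≠ S → T.1.WritesKey x → S.1.WritesKey x →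
        ∃! e, e ∈ E' ∧ e ∈ ({LEdge.mk T S (DepLbl.WW x), LEdge.mk S T (DepLbl.WW x)} :
          DepEdgeSet H.Vert Key) := fun x T S h hw hw' =>
      hcons _ (Or.inl ⟨x, T, S, h, hw, hw', rfl⟩)
    have wwtot : ∀ (x : Key) (T S : H.Vert), T ≠ S → T.1.WritesKey x → S.1.WritesKey x →
        LEdge.mk T S (DepLbl.WW x) ∈ E' ∨ LEdge.mk S T (DepLbl.WW x) ∈ E' := by
      intro x T S h hw hw'
      obtain ⟨e, ⟨heE, he2⟩, _⟩ := wwpair x T S h hw hw'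
      simp only [Set.mem_insert_iff, Set.mem_singleton_iff] at he2
      rcases he2 with rfl | rfl
      · exact Or.inl heE
      · exact Or.inr heE
    have wwasym : ∀ (x : Key) (T S : H.Vert), T ≠ S → T.1.WritesKey x → S.1.WritesKey x →
        LEdge.mk T S (DepLbl.WW x) ∈ E' → LEdge.mk S T (DepLbl.WW x) ∈ E' → False := by
      intro x T S h hw hw' h1 h2
      obtain ⟨e, _, hu⟩ := wwpair x T S h hw hw'
      have e2 := (hu (LEdge.mk T S (DepLbl.WW x)) ⟨h1, Or.inl rfl⟩).trans
        (hu (LEdge.mk S T (DepLbl.WW x)) ⟨h2, Or.inr rfl⟩).symm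
      simp only [LEdge.mk.injEq] at e2
      exact h e2.1
    refine ⟨WRr, WWr, RWr, ⟨?_, ?_, ?_, ?_, ?_⟩, ?_⟩
    · rintro x T S ⟨hT, hS, _⟩; exact ⟨hT, hS⟩
    · -- uniqueness of WR
      rintro x S hS ⟨v, hrd⟩
      obtain ⟨e, ⟨heE, heC⟩, hu⟩ := hcons _ (Or.inr ⟨x, ⟨S, hS⟩, v, hrd, rfl⟩)
      obtain ⟨T, hTw, hTne, rfl⟩ := heC
      refine ⟨T.1, ⟨T.2, hS, v, hTw, hrd, fun h => hTne (Subtype.ext h), heE⟩, ?_⟩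
      rintro T' ⟨hT', hS', v', hw', hr', hne', hE'⟩
      have hv : v' = v := freads_unique hr' hrd
      subst hv
      have := hu (LEdge.mk ⟨T', hT'⟩ ⟨S, hS'⟩ (DepLbl.WR x))
        ⟨hE', ⟨⟨T', hT'⟩, hw', fun h => hne' (congrArg Subtype.val h), rfl⟩⟩
      exact congrArg (fun e => (LEdge.src e).1) this
    · rintro x T S ⟨hT, hS, v, hw, hr, hne, _⟩; exact ⟨hne, v, hw, hr⟩
    · -- WW strict total order
      intro x
      refine ⟨?_, ?_, ?_, ?_⟩
      · rintro T S ⟨hT, hS, _, hTw, hSw, _⟩; exact ⟨⟨hT, hTw⟩, ⟨hS, hSw⟩⟩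
      · rintro T ⟨_, _, hne, _⟩; exact hne rfl
      · rintro T S U ⟨hT, hS, hTS, hTw, hSw, h1⟩ ⟨hS', hU, hSU, _, hUw, h2⟩
        have hSV : (⟨S, hS⟩ : H.Vert) = ⟨S, hS'⟩ := rfl
        by_cases hTU : T = U
        · subst hTU
          exact absurd h2 (fun h2 => wwasym x ⟨T, hT⟩ ⟨S, hS⟩
            (fun h => hTS (congrArg Subtype.val h)) hTw hSw h1 h2)
        · refine ⟨hT, hU, hTU, hTw, hUw, ?_⟩
          rcases wwtot x ⟨T, hT⟩ ⟨U, hU⟩ (fun h => hTU (congrArg Subtype.val h))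
              hTw hUw with h | h
          · exact h
          · exfalso
            refine hac ⟨(⟨T, hT⟩ : H.Vert), ?_⟩
            exact Relation.TransGen.tail
              (Relation.TransGen.tail (Relation.TransGen.single ⟨_, h1⟩) ⟨_, h2⟩) ⟨_, h⟩
      · rintro T ⟨hT, hTw⟩ S ⟨hS, hSw⟩ hne
        rcases wwtot x ⟨T, hT⟩ ⟨S, hS⟩ (fun h => hne (congrArg Subtype.val h))
            hTw hSw with h | h
        · exact Or.inl ⟨hT, hS, hne, hTw, hSw, h⟩
        · exact Or.inr ⟨hS, hT, hne.symm, hSw, hTw, h⟩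
    · intro x T S; exact Iff.rfl
    · -- acyclicity of DepUnion
      have step : ∀ T S, DepUnion H WRr WWr RWr T S →
          ∃ (hT : T ∈ H.txns) (hS : S ∈ H.txns),
            EStep E' (⟨T, hT⟩ : H.Vert) ⟨S, hS⟩ := by
        rintro T S (hso | ⟨x, hT, hS, v, _, _, _, hE⟩ | ⟨x, hT, hS, _, _, _, hE⟩ |
          ⟨x, hne, T', ⟨hT', hT, v, _, _, _, hE1⟩, ⟨hT'', hS, _, _, _, hE2⟩⟩)
        · obtain ⟨hT, hS⟩ := H.so_mem T S hso
          exact ⟨hT, hS, DepLbl.SO, hsub (Or.inl ⟨rfl, hso⟩)⟩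
        · exact ⟨hT, hS, DepLbl.WR x, hE⟩
        · exact ⟨hT, hS, DepLbl.WW x, hE⟩
        · refine ⟨hT, hS, DepLbl.RW x, ?_⟩
          exact hgen x ⟨T, hT⟩ ⟨T', hT'⟩ ⟨S, hS⟩ (fun h => hne (congrArg Subtype.val h))
            hE1 hE2
      intro a hcyc
      have lift : ∀ b c, Relation.TransGen (DepUnion H WRr WWr RWr) b c →
          ∃ (hB : b ∈ H.txns) (hC : c ∈ H.txns),
            Relation.TransGen (EStep E') (⟨b, hB⟩ : H.Vert) ⟨c, hC⟩ := by
        intro b c h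
        induction h with
        | single h =>
          obtain ⟨hB, hC, hs⟩ := step _ _ h
          exact ⟨hB, hC, Relation.TransGen.single hs⟩
        | tail _ h2 ih =>
          obtain ⟨hB, hM, hp⟩ := ih
          obtain ⟨hM', hC, hs⟩ := step _ _ h2
          exact ⟨hB, hC, hp.tail hs⟩
      obtain ⟨hA, hA', hp⟩ := lift a a hcyc
      exact hac ⟨⟨a, hA⟩, hp⟩

end DBIso
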